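/- (Correctness of decomposition-based rule evaluation.) Let r be a Datalog rule and ⟨T, χ, λ⟩ a hypertree decomposition of r satisfying conditions (1)–(4) that is moreover complete (every body atom B belongs to λ(p) for some node p with var(B) ⊆ χ(p)). Then for every dataset I, r[I] = { h(r)τ | τ ∈ π_{var(h(r))}( ⋈_{p∈N} Π_p[I] ) }: the natural join over all nodes of the in-node relations Π_p[I], projected to the head variables and substituted into the head, yields exactly the set of facts derivable by r from I. -/
import Mathlib


namespace Datalog

/-- An atom `P(t₁,…,tₖ)`: a predicate symbol applied to a list of terms, where
`Sum.inl v` denotes the variable `v` and `Sum.inr c` denotes the constant `c`. -/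
structure Atom where
  pred : ℕ
  args : List (ℕ ⊕ ℕ)
deriving DecidableEq

/-- A fact: a variable-free atom, i.e. a predicate applied to constants only. -/
structure Fact where
  pred : ℕ
  args : List ℕ
deriving DecidableEq

/-- Applying a substitution `σ` (a map from variables to constants) to an atom. -/
def Atom.subst (A : Atom) (σ : ℕ → ℕ) : Fact :=
  ⟨A.pred, A.args.map (Sum.elim σ id)⟩

/-- The set of variables occurring in an atom. -/
def Atom.vars (A : Atom) : Set ℕ := { v | Sum.inl v ∈ A.args }

/-- A Datalog rule: a head atom and a finite set of body atoms, which is safe: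
every variable of the head occurs in some body atom. -/
structure Rule where
  head : Atom
  body : Finset Atom
  safe : ∀ v ∈ head.vars, ∃ B ∈ body, v ∈ B.vars

/-- `r[I] = { h(rσ) | b(rσ) ⊆ I }`. -/
def Rule.eval (r : Rule) (I : Set Fact) : Set Fact :=
  { f | ∃ σ : ℕ → ℕ, (∀ B ∈ r.body, B.subst σ ∈ I) ∧ f = r.head.subst σ }

/-- `r[I ∸ Δ] = { h(rσ) | b(rσ) ⊆ I and b(rσ) ∩ Δ ≠ ∅ }`. -/
def Rule.evalDelta (r : Rule) (I Δ : Set Fact) : Set Fact :=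
  { f | ∃ σ : ℕ → ℕ, (∀ B ∈ r.body, B.subst σ ∈ I) ∧
        (∃ B ∈ r.body, B.subst σ ∈ Δ) ∧ f = r.head.subst σ }

/-- `Π[I] = ⋃_{r ∈ Π} r[I]`. -/
def progEval (P : Set Rule) (I : Set Fact) : Set Fact := ⋃ r ∈ P, r.eval I

/-- `Π[I ∸ Δ] = ⋃_{r ∈ Π} r[I ∸ Δ]`. -/
def progEvalDelta (P : Set Rule) (I Δ : Set Fact) : Set Fact := ⋃ r ∈ P, r.evalDelta I Δ

/-- `I_0 = E`, `I_{i+1} = I_i ∪ Π[I_i]`. -/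
def matSeq (P : Set Rule) (E : Set Fact) : ℕ → Set Fact
  | 0 => E
  | n + 1 => matSeq P E n ∪ progEval P (matSeq P E n)

/-- The materialisation `mat(Π, E) = ⋃_{i ≥ 0} I_i`. -/
def mat (P : Set Rule) (E : Set Fact) : Set Fact := ⋃ n, matSeq P E n

/-- A tuple over a set of variables `V`: an assignment of a constant to each variable of `V`. -/
def Tuple (V : Set ℕ) : Type := V → ℕ

/-- The restriction `σ|_V` of a substitution `σ` to the variables `V`. -/
def restrictT (V : Set ℕ) (σ : ℕ → ℕ) : Tuple V := fun v => σ v.1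

/-- Extension of a tuple to a total substitution (an arbitrary default value
outside of its domain; all uses below only depend on values inside the domain). -/
noncomputable def extendT {V : Set ℕ} (t : Tuple V) : ℕ → ℕ := fun v =>
  letI := Classical.propDecidable (v ∈ V)
  if h : v ∈ V then t ⟨v, h⟩ else 0

/-- Two tuples agree on every variable on which both are defined. -/
def agreeOn {Vp Vq : Set ℕ} (t : Tuple Vp) (s : Tuple Vq) : Prop :=
  ∀ v (h1 : v ∈ Vp) (h2 : v ∈ Vq), t ⟨v, h1⟩ = s ⟨v, h2⟩

/-- The natural join `⋈_p R_p` of a family of relations `R p` of tuples over `χ p`: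
the set of tuples over `⋃ p, χ p` whose restriction to each `χ p` lies in `R p`. -/
def natJoin {ι : Type} (χ : ι → Set ℕ) (R : ∀ p, Set (Tuple (χ p))) :
    Set (Tuple (⋃ p, χ p)) :=
  { t | ∀ p, restrictT (χ p) (extendT t) ∈ R p }

/-- The projection `π_O` of a relation: restriction of each tuple to the variables `O`. -/
noncomputable def projT {V : Set ℕ} (O : Set ℕ) (Rel : Set (Tuple V)) : Set (Tuple O) :=
  (fun t : Tuple V => restrictT O (extendT t)) '' Rel

/-- The semijoin `R_p ⋉ R_q`: tuples of `R_p` for which some tuple of `R_q`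
agrees with them on the common variables. -/
def semijoin {Vp Vq : Set ℕ} (Rp : Set (Tuple Vp)) (Rq : Set (Tuple Vq)) : Set (Tuple Vp) :=
  { t ∈ Rp | ∃ s ∈ Rq, agreeOn t s }

/-- A rooted tree on the node type `ι`, given by a parent function under which
every node reaches the root. -/
structure RootedTree (ι : Type) where
  root : ι
  parent : ι → ι
  parent_root : parent root = root
  reaches_root : ∀ p, ∃ n, parent^[n] p = root

namespace RootedTree

variable {ι : Type}

/-- `p` and `q` are joined by an edge of the tree. -/
def Adj (T : RootedTree ι) (p q : ι) : Prop :=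
  p ≠ q ∧ (T.parent p = q ∨ T.parent q = p)

/-- `c` is a child of `p`. -/
def childOf (T : RootedTree ι) (c p : ι) : Prop :=
  T.parent c = p ∧ c ≠ T.root

/-- The set of nodes of the subtree `T_p` rooted at `p`. -/
def descendants (T : RootedTree ι) (p : ι) : Set ι :=
  { q | ∃ n, T.parent^[n] q = p }

/-- The set of nodes `S` induces a connected subtree of `T`: it has a topmost
node reachable from every node of `S` along a parent path staying inside `S`. -/
def ConnSubtree (T : RootedTree ι) (S : Set ι) : Prop :=
  ∃ top ∈ S, ∀ p ∈ S, ∃ n, T.parent^[n] p = top ∧ ∀ m ≤ n, T.parent^[m] p ∈ S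

end RootedTree

/-- The set of variables occurring in a finite set of atoms. -/
def atomsVars (s : Finset Atom) : Set ℕ := ⋃ B ∈ s, Atom.vars B

/-- The set of variables occurring in a rule. -/
def Rule.vars (r : Rule) : Set ℕ := Atom.vars r.head ∪ atomsVars r.body

/-- The in-node instantiations `Π_p[I] = { σ|_{χ(p)} | λ(p)σ ⊆ I }`. -/
def nodeEval (χp : Set ℕ) (lamp : Finset Atom) (I : Set Fact) : Set (Tuple χp) :=
  { t | ∃ σ : ℕ → ℕ, (∀ B ∈ lamp, B.subst σ ∈ I) ∧ t = restrictT χp σ }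

/-- `Π_p[I, Δ] = { σ|_{χ(p)} | λ(p)σ ⊆ I and λ(p)σ ∩ Δ ≠ ∅ }`. -/
def nodeEvalDelta (χp : Set ℕ) (lamp : Finset Atom) (I Δ : Set Fact) : Set (Tuple χp) :=
  { t | ∃ σ : ℕ → ℕ, (∀ B ∈ lamp, B.subst σ ∈ I) ∧
        (∃ B ∈ lamp, B.subst σ ∈ Δ) ∧ t = restrictT χp σ }

/-- A hypertree decomposition `⟨T, χ, λ⟩` of the rule `r`, with node type `ι`,
satisfying conditions (1)–(4). -/
structure HTD (r : Rule) (ι : Type) [Fintype ι] where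
  T : RootedTree ι
  χ : ι → Set ℕ
  lam : ι → Finset Atom
  lam_sub : ∀ p, lam p ⊆ r.body
  cond1 : ∀ B ∈ r.body, ∃ p, Atom.vars B ⊆ χ p
  cond2 : ∀ v ∈ r.vars, T.ConnSubtree { p | v ∈ χ p }
  cond3 : ∀ p, χ p ⊆ atomsVars (lam p)
  cond4 : ∀ p, atomsVars (lam p) ∩ (⋃ q ∈ T.descendants p, χ q) ⊆ χ p

/-- The decomposition is complete: every body atom `B` belongs to `λ(p)` for
some node `p` with `var(B) ⊆ χ(p)`. -/
def HTD.Complete {r : Rule} {ι : Type} [Fintype ι] (H : HTD r ι) : Prop :=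
  ∀ B ∈ r.body, ∃ p, B ∈ H.lam p ∧ Atom.vars B ⊆ H.χ p

theorem Atom.subst_congr {A : Atom} {σ₁ σ₂ : ℕ → ℕ}
    (h : ∀ v ∈ A.vars, σ₁ v = σ₂ v) : A.subst σ₁ = A.subst σ₂ := by
  unfold Atom.subst
  congr 1
  apply List.map_congr_left
  intro a ha
  cases a with
  | inl v => exact h v ha
  | inr c => rfl

theorem extendT_mem {V : Set ℕ} (t : Tuple V) {v : ℕ} (h : v ∈ V) :
    extendT t v = t ⟨v, h⟩ := by
  unfold extendT
  simp [h]

/-- correctness of decomposition-based rule evaluation: for a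
complete hypertree decomposition, joining the in-node relations `Π_p[I]` over all
nodes, projecting to the head variables and substituting into the head yields
exactly `r[I]`. -/
theorem decomposition_rule_eval_correct (r : Rule) (ι : Type) [Fintype ι]
    (H : HTD r ι) (hc : H.Complete) (I : Set Fact) :
    r.eval I =
      { f | ∃ τ ∈ projT (Atom.vars r.head)
              (natJoin H.χ (fun p => nodeEval (H.χ p) (H.lam p) I)),
            f = r.head.subst (extendT τ) } := by
  have hhead : Atom.vars r.head ⊆ ⋃ p, H.χ p := by
    intro v hv
    obtain ⟨B, hB, hvB⟩ := r.safe v hv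
    obtain ⟨p, _, hsub⟩ := hc B hB
    exact Set.mem_iUnion.2 ⟨p, hsub hvB⟩
  ext f
  constructor
  · rintro ⟨σ, hσ, rfl⟩
    set t : Tuple (⋃ p, H.χ p) := restrictT (⋃ p, H.χ p) σ with ht
    have hagree : ∀ v ∈ ⋃ p, H.χ p, extendT t v = σ v := by
      intro v hv
      rw [extendT_mem t hv]; rfl
    have htJ : t ∈ natJoin H.χ (fun p => nodeEval (H.χ p) (H.lam p) I) := by
      intro p
      refine ⟨σ, fun B hB => hσ B (H.lam_sub p hB), ?_⟩
      funext v
      exact hagree v.1 (Set.mem_iUnion.2 ⟨p, v.2⟩)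
    refine ⟨restrictT (Atom.vars r.head) (extendT t), ⟨t, htJ, rfl⟩, ?_⟩
    apply Atom.subst_congr
    intro v hv
    rw [extendT_mem (restrictT (Atom.vars r.head) (extendT t)) hv]
    exact (hagree v (hhead hv)).symm
  · rintro ⟨τ, ⟨t, htJ, rfl⟩, rfl⟩
    refine ⟨extendT t, ?_, ?_⟩
    · intro B hB
      obtain ⟨p, hBp, hsub⟩ := hc B hB
      obtain ⟨σp, hσp, heq⟩ := htJ p
      have : B.subst (extendT t) = B.subst σp := by
        apply Atom.subst_congr
        intro v hv
        have hvχ : v ∈ H.χ p := hsub hv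
        have := congrFun heq ⟨v, hvχ⟩
        simpa [restrictT, extendT_mem t (Set.mem_iUnion.2 ⟨p, hvχ⟩)] using this
      rw [this]; exact hσp B hBp
    · apply Atom.subst_congr
      intro v hv
      rw [extendT_mem (restrictT (Atom.vars r.head) (extendT t)) hv]
      rfl

end Datalog
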